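/- Let H be a Hopf algebra over k, A a bialgebra over k, and j : H → A, π : A → H bialgebra maps with π∘j = id_H. Let Π : A → A be defined by Π(a) = a₁ j(S(π(a₂))). Then Π∘Π = Π, π∘Π = η_H∘ε_A, and Im Π = {a ∈ A : a₁ ⊗ π(a₂) = a ⊗ 1} = A^{co π}. -/

import Mathlib

/-!
Everything happens in convolution algebras `Hom(C, B)`, where `Π = id * jSπ`. Since `π` is an
algebra map and `πj = id`, `πΠ = π * Sπ = (id * S) ∘ π = ηε`.

For coinvariance let `ρ = (id ⊗ π)Δ`, `t = (· ⊗ 1)`, `ψ = tj`, `φ = ρj = (j ⊗ id)Δ` and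
`w = 1 ⊗ π(·)`. In `Hom(A, A ⊗ H)` one has `ρ = t * w` and `φπ = ψπ * w`, while `ψSπ` and `φSπ`
are convolution inverses of `ψπ` and `φπ`; so
`ρΠ = ρ * φSπ = t * ψSπ * ψπ * w * φSπ = t * ψSπ * φπ * φSπ = tΠ`.
Conversely, a coinvariant `a` has `Π a = a j(S 1) = a`; hence `Π` is idempotent with image the
coinvariants.
-/

open TensorProduct Coalgebra

universe u

/-- The projection `Π = id_A * (j ∘ S ∘ π)`, i.e. `Π(a) = a₁ j(S(π(a₂)))`. -/
noncomputable def PiMap {k H A : Type u} [Field k] [Ring H] [Ring A]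
    [HopfAlgebra k H] [Bialgebra k A] (j : H →ₐc[k] A) (π : A →ₐc[k] H) : A →ₗ[k] A :=
  LinearMap.mul' k A
    ∘ₗ TensorProduct.map LinearMap.id
        ((j : H →ₗ[k] A) ∘ₗ HopfAlgebra.antipode (R := k) ∘ₗ (π : A →ₗ[k] H))
    ∘ₗ (Coalgebra.comul : A →ₗ[k] A ⊗[k] A)

section Convolution

open HopfAlgebra WithConv

variable {R H C B : Type*} [CommSemiring R] [Semiring H] [HopfAlgebra R H]
  [AddCommMonoid C] [Module R C] [Coalgebra R C] [Semiring B] [Algebra R B]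

lemma antipode_mul_id_of_algHom_coalgHom (f : H →ₐ[R] B) (p : C →ₗc[R] H) :
    toConv (f.toLinearMap ∘ₗ antipode R ∘ₗ p.toLinearMap) * toConv (f.toLinearMap ∘ₗ p.toLinearMap)
      = 1 := by
  calc _ = toConv ((f.toLinearMap ∘ₗ
          (toConv (antipode R) * toConv LinearMap.id : WithConv (H →ₗ[R] H)).ofConv) ∘ₗ
          p.toLinearMap) := by
        rw [LinearMap.algHom_comp_convMul_distrib, LinearMap.convMul_comp_coalgHom_distrib]; rfl
    _ = 1 := by rw [LinearMap.antipode_mul_id]; ext; simp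

lemma id_mul_antipode_of_algHom_coalgHom (f : H →ₐ[R] B) (p : C →ₗc[R] H) :
    toConv (f.toLinearMap ∘ₗ p.toLinearMap) * toConv (f.toLinearMap ∘ₗ antipode R ∘ₗ p.toLinearMap)
      = 1 := by
  calc _ = toConv ((f.toLinearMap ∘ₗ
          (toConv LinearMap.id * toConv (antipode R) : WithConv (H →ₗ[R] H)).ofConv) ∘ₗ
          p.toLinearMap) := by
        rw [LinearMap.algHom_comp_convMul_distrib, LinearMap.convMul_comp_coalgHom_distrib]; rfl
    _ = 1 := by rw [LinearMap.id_mul_antipode]; ext; simp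

variable {M N : Type*} [Semiring M] [Algebra R M] [Semiring N] [Algebra R N]

lemma includeLeft_comp_convMul_includeRight_comp (f : C →ₗ[R] M) (g : C →ₗ[R] N) :
    toConv ((Algebra.TensorProduct.includeLeft : M →ₐ[R] M ⊗[R] N).toLinearMap ∘ₗ f) *
      toConv ((Algebra.TensorProduct.includeRight : N →ₐ[R] M ⊗[R] N).toLinearMap ∘ₗ g)
      = toConv (map f g ∘ₗ comul) := by
  ext c
  rw [(ℛ R c).convMul_apply]
  simp [← (ℛ R c).eq, map_sum]

end Convolution

section RightCoaction

open Algebra.TensorProduct WithConv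

variable {k H A : Type*} [CommSemiring k] [Semiring H] [Semiring A] [Bialgebra k H]
  [Bialgebra k A] (π : A →ₐc[k] H)

noncomputable def rightCoaction : A →ₐ[k] A ⊗[k] H :=
  (Algebra.TensorProduct.map (AlgHom.id k A) π).comp (Bialgebra.comulAlgHom k A)

lemma rightCoaction_apply (a : A) :
    rightCoaction π a = TensorProduct.map LinearMap.id (π : A →ₗ[k] H) (comul a) :=
  rfl

lemma rightCoaction_eq_convMul :
    toConv (rightCoaction π).toLinearMap =
      toConv ((includeLeft : A →ₐ[k] A ⊗[k] H).toLinearMap ∘ₗ LinearMap.id) *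
        toConv ((includeRight : H →ₐ[k] A ⊗[k] H).toLinearMap ∘ₗ (π : A →ₗ[k] H)) := by
  rw [includeLeft_comp_convMul_includeRight_comp]
  ext a
  exact rightCoaction_apply π a

lemma rightCoaction_comp_of_comp_eq_id (j : H →ₐc[k] A) (hπj : π.comp j = BialgHom.id k H) :
    (rightCoaction π).toLinearMap ∘ₗ (j : H →ₗ[k] A) =
      TensorProduct.map (j : H →ₗ[k] A) LinearMap.id ∘ₗ comul := by
  have hπj' : (π : A →ₗ[k] H) ∘ₗ (j : H →ₗ[k] A) = LinearMap.id := congr(($hπj).toLinearMap)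
  calc (rightCoaction π).toLinearMap ∘ₗ (j : H →ₗ[k] A)
      = TensorProduct.map LinearMap.id (π : A →ₗ[k] H) ∘ₗ comul ∘ₗ (j : H →ₗ[k] A) := by
        ext; exact rightCoaction_apply π _
    _ = TensorProduct.map LinearMap.id (π : A →ₗ[k] H) ∘ₗ
          TensorProduct.map (j : H →ₗ[k] A) (j : H →ₗ[k] A) ∘ₗ comul := by
        rw [CoalgHomClass.map_comp_comul]
    _ = TensorProduct.map (j : H →ₗ[k] A) LinearMap.id ∘ₗ comul := by
        rw [← LinearMap.comp_assoc, ← TensorProduct.map_comp, hπj', LinearMap.id_comp]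

lemma rightCoaction_comp_comp_eq_convMul (j : H →ₐc[k] A) (hπj : π.comp j = BialgHom.id k H) :
    toConv (((rightCoaction π).comp (j : H →ₐ[k] A)).toLinearMap ∘ₗ (π : A →ₗ[k] H)) =
      toConv (((includeLeft : A →ₐ[k] A ⊗[k] H).comp (j : H →ₐ[k] A)).toLinearMap ∘ₗ
          (π : A →ₗ[k] H)) *
        toConv ((includeRight : H →ₐ[k] A ⊗[k] H).toLinearMap ∘ₗ (π : A →ₗ[k] H)) := by
  have hsplit : toConv ((rightCoaction π).toLinearMap ∘ₗ (j : H →ₗ[k] A)) =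
      toConv ((includeLeft : A →ₐ[k] A ⊗[k] H).toLinearMap ∘ₗ (j : H →ₗ[k] A)) *
        toConv ((includeRight : H →ₐ[k] A ⊗[k] H).toLinearMap ∘ₗ LinearMap.id) := by
    rw [includeLeft_comp_convMul_includeRight_comp, rightCoaction_comp_of_comp_eq_id π j hπj]
  apply ofConv_injective
  have hsplitπ := congr(($hsplit).ofConv ∘ₗ (π : A →ₗc[k] H).toLinearMap)
  rwa [LinearMap.convMul_comp_coalgHom_distrib] at hsplitπ

end RightCoaction

section Projection

open Algebra.TensorProduct WithConv HopfAlgebra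

variable {k H A : Type u} [Field k] [Ring H] [Ring A] [HopfAlgebra k H] [Bialgebra k A]
  (j : H →ₐc[k] A) (π : A →ₐc[k] H)

lemma piMap_eq_convMul : PiMap j π =
    (toConv LinearMap.id * toConv ((j : H →ₗ[k] A) ∘ₗ antipode k ∘ₗ (π : A →ₗ[k] H))).ofConv :=
  rfl

lemma comp_piMap (hπj : π.comp j = BialgHom.id k H) :
    (π : A →ₗ[k] H) ∘ₗ PiMap j π = Algebra.linearMap k H ∘ₗ counit := by
  have hπj' : (π : A →ₗ[k] H) ∘ₗ (j : H →ₗ[k] A) = LinearMap.id := congr(($hπj).toLinearMap)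
  calc (π : A →ₗ[k] H) ∘ₗ PiMap j π
      = (toConv ((π : A →ₗ[k] H) ∘ₗ LinearMap.id) *
          toConv (((π : A →ₗ[k] H) ∘ₗ (j : H →ₗ[k] A)) ∘ₗ antipode k ∘ₗ
            (π : A →ₗ[k] H))).ofConv :=
        LinearMap.algHom_comp_convMul_distrib (π : A →ₐ[k] H) _ _
    _ = (toConv ((AlgHom.id k H).toLinearMap ∘ₗ (π : A →ₗc[k] H).toLinearMap) *
          toConv ((AlgHom.id k H).toLinearMap ∘ₗ antipode k ∘ₗ
            (π : A →ₗc[k] H).toLinearMap)).ofConv := by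
        rw [hπj']; rfl
    _ = Algebra.linearMap k H ∘ₗ counit := by
        rw [id_mul_antipode_of_algHom_coalgHom]; rfl

lemma piMap_apply_of_rightCoaction_eq {a : A} (ha : rightCoaction π a = a ⊗ₜ 1) :
    PiMap j π a = a := by
  have : PiMap j π a = LinearMap.mul' k A
      (TensorProduct.map LinearMap.id ((j : H →ₗ[k] A) ∘ₗ antipode k) (rightCoaction π a)) := by
    rw [rightCoaction_apply, ← LinearMap.comp_apply (TensorProduct.map _ _),
      ← TensorProduct.map_comp]
    rfl
  simp [this, ha]

lemma rightCoaction_comp_piMap (hπj : π.comp j = BialgHom.id k H) :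
    (rightCoaction π).toLinearMap ∘ₗ PiMap j π =
      (includeLeft : A →ₐ[k] A ⊗[k] H).toLinearMap ∘ₗ PiMap j π := by
  set ι := (includeLeft : A →ₐ[k] A ⊗[k] H)
  set ψ := ι.comp (j : H →ₐ[k] A)
  set φ := (rightCoaction π).comp (j : H →ₐ[k] A)
  set p : A →ₗc[k] H := (π : A →ₗc[k] H)
  set w := toConv ((includeRight : H →ₐ[k] A ⊗[k] H).toLinearMap ∘ₗ p.toLinearMap)
  have hψ : toConv (ψ.toLinearMap ∘ₗ antipode k ∘ₗ p.toLinearMap) *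
      toConv (ψ.toLinearMap ∘ₗ p.toLinearMap) = 1 :=
    antipode_mul_id_of_algHom_coalgHom ψ p
  have hφ : toConv (φ.toLinearMap ∘ₗ p.toLinearMap) *
      toConv (φ.toLinearMap ∘ₗ antipode k ∘ₗ p.toLinearMap) = 1 :=
    id_mul_antipode_of_algHom_coalgHom φ p
  have hρ : toConv (rightCoaction π).toLinearMap = toConv (ι.toLinearMap ∘ₗ LinearMap.id) * w :=
    rightCoaction_eq_convMul π
  have hφw :
      toConv (φ.toLinearMap ∘ₗ p.toLinearMap) = toConv (ψ.toLinearMap ∘ₗ p.toLinearMap) * w :=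
    rightCoaction_comp_comp_eq_convMul π j hπj
  apply toConv_injective
  calc toConv ((rightCoaction π).toLinearMap ∘ₗ PiMap j π)
      = toConv (rightCoaction π).toLinearMap *
          toConv (φ.toLinearMap ∘ₗ antipode k ∘ₗ p.toLinearMap) :=
        congrArg toConv (LinearMap.algHom_comp_convMul_distrib (rightCoaction π) _ _)
    _ = toConv (ι.toLinearMap ∘ₗ LinearMap.id) *
          (toConv (ψ.toLinearMap ∘ₗ antipode k ∘ₗ p.toLinearMap) *
            toConv (ψ.toLinearMap ∘ₗ p.toLinearMap)) * w *
          toConv (φ.toLinearMap ∘ₗ antipode k ∘ₗ p.toLinearMap) := by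
        rw [hψ, mul_one, hρ]
    _ = toConv (ι.toLinearMap ∘ₗ LinearMap.id) *
          toConv (ψ.toLinearMap ∘ₗ antipode k ∘ₗ p.toLinearMap) *
          (toConv (φ.toLinearMap ∘ₗ p.toLinearMap) *
            toConv (φ.toLinearMap ∘ₗ antipode k ∘ₗ p.toLinearMap)) := by
        rw [hφw]; simp only [mul_assoc]
    _ = toConv (ι.toLinearMap ∘ₗ PiMap j π) := by
        rw [hφ, mul_one, piMap_eq_convMul, LinearMap.algHom_comp_convMul_distrib]
        rfl

end Projection

theorem stmt_11 {k H A : Type u} [Field k] [Ring H] [Ring A]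
    [HopfAlgebra k H] [Bialgebra k A]
    (j : H →ₐc[k] A) (π : A →ₐc[k] H)
    (hπj : π.comp j = BialgHom.id k H) :
    (PiMap j π ∘ₗ PiMap j π = PiMap j π) ∧
    ((π : A →ₗ[k] H) ∘ₗ PiMap j π
      = Algebra.linearMap k H ∘ₗ (Coalgebra.counit : A →ₗ[k] k)) ∧
    (∀ a : A, a ∈ LinearMap.range (PiMap j π) ↔
      TensorProduct.map LinearMap.id (π : A →ₗ[k] H) (Coalgebra.comul a)
        = a ⊗ₜ (1 : H)) := by
  have hcoinv (b : A) : rightCoaction π (PiMap j π b) = PiMap j π b ⊗ₜ 1 :=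
    congr($(rightCoaction_comp_piMap j π hπj) b)
  refine ⟨LinearMap.ext fun a => piMap_apply_of_rightCoaction_eq j π (hcoinv a),
    comp_piMap j π hπj, fun a => ?_⟩
  rw [← rightCoaction_apply]
  constructor
  · rintro ⟨b, rfl⟩
    exact hcoinv b
  · exact fun ha => ⟨a, piMap_apply_of_rightCoaction_eq j π ha⟩
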